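/- arXiv:2502.18870 — 6 statements merged into one kernel-verified Lean document; each statement's English description precedes it below -/
import Mathlib

section
/- Every non-negative integer n can be uniquely represented as n = ∑_{i≥0} a_i F_{i+2}, where a_i ∈ {0,1,2}, a_i = 0 whenever i is odd, and whenever i < j are even indices with a_i = a_j = 2, there exists an even k with i < k < j and a_k = 0 (Chung-Graham representation). -/
/-- The value represented by a finitely supported digit sequence:
    `∑ i, a i * F (i+2)` where `F` is the Fibonacci sequence. -/
def fibVal (a : ℕ →₀ ℕ) : ℕ := a.sum fun i c => c * Nat.fib (i + 2)

/-- Zeckendorf conditions: binary digits with no two consecutive 1's. -/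
def IsZeckendorf (a : ℕ →₀ ℕ) : Prop :=
  (∀ i, a i ≤ 1) ∧ (∀ i, a i * a (i + 1) = 0)

/-- Chung-Graham conditions: digits in {0,1,2}, zero at odd indices, and
    between any two even indices carrying digit 2 there is an even index
    carrying digit 0. -/
def IsChungGraham (a : ℕ →₀ ℕ) : Prop :=
  (∀ i, a i ≤ 2) ∧ (∀ i, Odd i → a i = 0) ∧
  (∀ i j, Even i → Even j → i < j → a i = 2 → a j = 2 →
    ∃ k, Even k ∧ i < k ∧ k < j ∧ a k = 0)

/-- The `cgsplit` rule: digit 0 ↦ (0,0), 1 ↦ (0,1), 2 ↦ (1,1). -/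
def IsSplit (a b c : ℕ →₀ ℕ) : Prop :=
  ∀ i, (a i = 0 → b i = 0 ∧ c i = 0) ∧
       (a i = 1 → b i = 0 ∧ c i = 1) ∧
       (a i = 2 → b i = 1 ∧ c i = 1)

/-!
Only the even positions `2t` carry digits, with weights `F (2t+2)`. An admissible string of `M`
digits has value `< F (2M+2)`, and `< F (2M+1)` when every `2` is followed by a `0` inside the
string. Since `F (2M+4) = 2 F (2M+2) + F (2M+1)`, the top digit of an admissible string of
length `M+1` is forced to be its value divided by `F (2M+2)` (uniqueness), and conversely any
`n < F (2M+4)` is reached by taking that quotient as the top digit and recursing on the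
remainder (existence).
-/

namespace ChungGraham

open Finset

/-- `d t` is the digit `a (2 t)` of the paper; odd positions carry no digit. -/
def value (d : ℕ → ℕ) (M : ℕ) : ℕ := ∑ t ∈ range M, d t * Nat.fib (2 * t + 2)

def Admissible (d : ℕ → ℕ) (M : ℕ) : Prop :=
  (∀ t < M, d t ≤ 2) ∧
  ∀ t u, t < u → u < M → d t = 2 → d u = 2 → ∃ k, t < k ∧ k < u ∧ d k = 0

def ZeroAboveTwos (d : ℕ → ℕ) (M : ℕ) : Prop :=
  ∀ t < M, d t = 2 → ∃ k, t < k ∧ k < M ∧ d k = 0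

section DigitStrings

variable {d e : ℕ → ℕ} {M : ℕ}

lemma value_succ (d : ℕ → ℕ) (M : ℕ) :
    value d (M + 1) = value d M + d M * Nat.fib (2 * M + 2) :=
  sum_range_succ _ _

lemma admissible_succ_iff :
    Admissible d (M + 1) ↔ Admissible d M ∧ d M ≤ 2 ∧ (d M = 2 → ZeroAboveTwos d M) := by
  constructor
  · rintro ⟨hle, hsep⟩
    exact ⟨⟨fun t ht => hle t (by omega), fun t u htu hu => hsep t u htu (by omega)⟩,
      hle M (by omega), fun h2 t ht h2t => hsep t M ht (by omega) h2t h2⟩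
  · rintro ⟨⟨hle, hsep⟩, hM, hzero⟩
    refine ⟨fun t ht => ?_, fun t u htu hu h2t h2u => ?_⟩
    · rcases Nat.lt_succ_iff_lt_or_eq.mp ht with ht | rfl
      exacts [hle t ht, hM]
    · rcases Nat.lt_succ_iff_lt_or_eq.mp hu with hu | rfl
      exacts [hsep t u htu hu h2t h2u, hzero h2u t htu h2t]

lemma zeroAboveTwos_succ_iff :
    ZeroAboveTwos d (M + 1) ↔ d M ≠ 2 ∧ (d M ≠ 0 → ZeroAboveTwos d M) := by
  constructor
  · intro h
    refine ⟨fun h2 => ?_, fun h0 t ht h2 => ?_⟩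
    · obtain ⟨k, hk, hkM, -⟩ := h M (by omega) h2
      omega
    · obtain ⟨k, hk, hkM, hk0⟩ := h t (by omega) h2
      have : k ≠ M := by rintro rfl; exact h0 hk0
      exact ⟨k, hk, by omega, hk0⟩
  · rintro ⟨hM, h⟩ t ht h2
    have htM : t < M := by
      rcases Nat.lt_succ_iff_lt_or_eq.mp ht with ht | rfl
      exacts [ht, absurd h2 hM]
    by_cases h0 : d M = 0
    · exact ⟨M, htM, by omega, h0⟩
    · obtain ⟨k, hk, hkM, hk0⟩ := h h0 t htM h2
      exact ⟨k, hk, by omega, hk0⟩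

lemma value_congr (h : ∀ t < M, d t = e t) : value d M = value e M :=
  sum_congr rfl fun t ht => by rw [h t (mem_range.mp ht)]

lemma admissible_congr (h : ∀ t < M, d t = e t) (hd : Admissible d M) : Admissible e M := by
  refine ⟨fun t ht => h t ht ▸ hd.1 t ht, fun t u htu hu h2t h2u => ?_⟩
  obtain ⟨k, hk, hku, hk0⟩ :=
    hd.2 t u htu hu ((h t (by omega)).trans h2t) ((h u hu).trans h2u)
  exact ⟨k, hk, hku, (h k (by omega)).symm.trans hk0⟩

lemma zeroAboveTwos_congr (h : ∀ t < M, d t = e t) (hd : ZeroAboveTwos d M) :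
    ZeroAboveTwos e M := by
  intro t ht h2
  obtain ⟨k, hk, hkM, hk0⟩ := hd t ht ((h t ht).trans h2)
  exact ⟨k, hk, hkM, (h k hkM).symm.trans hk0⟩

lemma fib_two_mul_add_four (M : ℕ) :
    Nat.fib (2 * (M + 1) + 2) = Nat.fib (2 * M + 2) + Nat.fib (2 * (M + 1) + 1) :=
  Nat.fib_add_two

lemma fib_two_mul_add_three (M : ℕ) :
    Nat.fib (2 * (M + 1) + 1) = Nat.fib (2 * M + 1) + Nat.fib (2 * M + 2) :=
  Nat.fib_add_two

lemma value_lt_fib (hd : Admissible d M) :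
    value d M < Nat.fib (2 * M + 2) ∧
      (ZeroAboveTwos d M → value d M < Nat.fib (2 * M + 1)) := by
  induction M with
  | zero => simp [value]
  | succ M ih =>
    obtain ⟨hd, hle, htwo⟩ := admissible_succ_iff.mp hd
    obtain ⟨hlt, hltZ⟩ := ih hd
    have h4 := fib_two_mul_add_four M
    have h3 := fib_two_mul_add_three M
    rw [value_succ, zeroAboveTwos_succ_iff]
    obtain h | h | h : d M = 0 ∨ d M = 1 ∨ d M = 2 := by omega
    · rw [h]
      exact ⟨by omega, fun _ => by omega⟩
    · rw [h]
      exact ⟨by omega, fun hZ => by have := hltZ (hZ.2 one_ne_zero); omega⟩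
    · have := hltZ (htwo h)
      exact ⟨by rw [h]; omega, fun hZ => absurd h hZ.1⟩

lemma value_succ_div (hd : Admissible d (M + 1)) :
    value d (M + 1) / Nat.fib (2 * M + 2) = d M := by
  have hlt := (value_lt_fib (admissible_succ_iff.mp hd).1).1
  rw [value_succ, Nat.add_mul_div_right _ _ (Nat.fib_pos.mpr (by omega)),
    Nat.div_eq_of_lt hlt, zero_add]

lemma value_succ_mod (hd : Admissible d (M + 1)) :
    value d (M + 1) % Nat.fib (2 * M + 2) = value d M := by
  rw [value_succ, Nat.add_mul_mod_self_right,
    Nat.mod_eq_of_lt (value_lt_fib (admissible_succ_iff.mp hd).1).1]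

lemma eq_of_value_eq (hd : Admissible d M) (he : Admissible e M)
    (h : value d M = value e M) : ∀ t < M, d t = e t := by
  induction M with
  | zero => intro t ht; omega
  | succ M ih =>
    have htop : d M = e M := by rw [← value_succ_div hd, ← value_succ_div he, h]
    have hrest : value d M = value e M := by rw [← value_succ_mod hd, ← value_succ_mod he, h]
    intro t ht
    rcases Nat.lt_succ_iff_lt_or_eq.mp ht with ht | rfl
    · exact ih (admissible_succ_iff.mp hd).1 (admissible_succ_iff.mp he).1 hrest t ht
    · exact htop

section Update

variable (d : ℕ → ℕ) (M c : ℕ)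

lemma update_eq_of_lt : ∀ t < M, Function.update d M c t = d t :=
  fun _ ht => Function.update_of_ne ht.ne _ _

lemma value_update_succ :
    value (Function.update d M c) (M + 1) = value d M + c * Nat.fib (2 * M + 2) := by
  rw [value_succ, Function.update_self, value_congr (update_eq_of_lt d M c)]

variable {d M c}

lemma admissible_update_succ (hd : Admissible d M) (hc : c ≤ 2)
    (h2 : c = 2 → ZeroAboveTwos d M) :
    Admissible (Function.update d M c) (M + 1) := by
  have hbelow := fun t ht => (update_eq_of_lt d M c t ht).symm
  rw [admissible_succ_iff, Function.update_self]
  exact ⟨admissible_congr hbelow hd, hc, fun hc2 => zeroAboveTwos_congr hbelow (h2 hc2)⟩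

lemma zeroAboveTwos_update_succ (hc : c ≠ 2) (h0 : c ≠ 0 → ZeroAboveTwos d M) :
    ZeroAboveTwos (Function.update d M c) (M + 1) := by
  have hbelow := fun t ht => (update_eq_of_lt d M c t ht).symm
  rw [zeroAboveTwos_succ_iff, Function.update_self]
  exact ⟨hc, fun hc0 => zeroAboveTwos_congr hbelow (h0 hc0)⟩

end Update

lemma exists_admissible_value_eq (M : ℕ) :
    ∀ n, (n < Nat.fib (2 * M + 2) → ∃ d, Admissible d M ∧ value d M = n) ∧
      (n < Nat.fib (2 * M + 1) →
        ∃ d, Admissible d M ∧ ZeroAboveTwos d M ∧ value d M = n) := by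
  induction M with
  | zero =>
    intro n
    refine ⟨fun hn => ⟨0, ?_, ?_⟩, fun hn => ⟨0, ?_, ?_, ?_⟩⟩ <;>
      simp_all [Admissible, ZeroAboveTwos, value]
  | succ M ih =>
    intro n
    have h4 := fib_two_mul_add_four M
    have h3 := fib_two_mul_add_three M
    have hF := value_update_succ (M := M)
    refine ⟨fun hn => ?_, fun hn => ?_⟩
    · obtain h0 | h1 | h2 : n < Nat.fib (2 * M + 2) ∨
          Nat.fib (2 * M + 2) ≤ n ∧ n < 2 * Nat.fib (2 * M + 2) ∨
          2 * Nat.fib (2 * M + 2) ≤ n := by omega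
      · obtain ⟨d, hd, rfl⟩ := (ih n).1 h0
        exact ⟨_, admissible_update_succ hd (c := 0) (by omega) (by omega), by rw [hF]; omega⟩
      · obtain ⟨d, hd, hv⟩ := (ih (n - Nat.fib (2 * M + 2))).1 (by omega)
        exact ⟨_, admissible_update_succ hd (c := 1) (by omega) (by omega), by rw [hF]; omega⟩
      · obtain ⟨d, hd, hZ, hv⟩ := (ih (n - 2 * Nat.fib (2 * M + 2))).2 (by omega)
        exact ⟨_, admissible_update_succ hd (c := 2) le_rfl fun _ => hZ, by rw [hF]; omega⟩
    · obtain h0 | h1 : n < Nat.fib (2 * M + 2) ∨ Nat.fib (2 * M + 2) ≤ n := by omega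
      · obtain ⟨d, hd, rfl⟩ := (ih n).1 h0
        exact ⟨_, admissible_update_succ hd (c := 0) (by omega) (by omega),
          zeroAboveTwos_update_succ (by omega) (by omega), by rw [hF]; omega⟩
      · obtain ⟨d, hd, hZ, hv⟩ := (ih (n - Nat.fib (2 * M + 2))).2 (by omega)
        exact ⟨_, admissible_update_succ hd (c := 1) (by omega) (by omega),
          zeroAboveTwos_update_succ (by omega) fun _ => hZ, by rw [hF]; omega⟩

end DigitStrings

noncomputable def toFinsupp (d : ℕ → ℕ) (M : ℕ) : ℕ →₀ ℕ :=
  ∑ t ∈ range M, Finsupp.single (2 * t) (d t)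

section ToFinsupp

variable {d e : ℕ → ℕ} {M : ℕ}

lemma toFinsupp_apply_two_mul (d : ℕ → ℕ) (M s : ℕ) :
    toFinsupp d M (2 * s) = if s < M then d s else 0 := by
  simp only [toFinsupp, Finsupp.finsetSum_apply, Finsupp.single_apply,
    Nat.mul_left_cancel_iff two_pos, sum_ite_eq', mem_range]

lemma toFinsupp_apply_of_odd (d : ℕ → ℕ) (M : ℕ) {i : ℕ} (hi : Odd i) :
    toFinsupp d M i = 0 := by
  obtain ⟨s, rfl⟩ := hi
  simp only [toFinsupp, Finsupp.finsetSum_apply]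
  exact sum_eq_zero fun t _ => Finsupp.single_eq_of_ne (by omega)

lemma toFinsupp_congr (h : ∀ t < M, d t = e t) : toFinsupp d M = toFinsupp e M :=
  sum_congr rfl fun t ht => by rw [h t (mem_range.mp ht)]

lemma fibVal_toFinsupp (d : ℕ → ℕ) (M : ℕ) : fibVal (toFinsupp d M) = value d M := by
  rw [fibVal, toFinsupp, ← Finsupp.sum_finsetSum_index (fun _ => zero_mul _)
    (fun _ _ _ => add_mul _ _ _)]
  exact sum_congr rfl fun t _ => Finsupp.sum_single_index (zero_mul _)

lemma isChungGraham_toFinsupp (hd : Admissible d M) : IsChungGraham (toFinsupp d M) := by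
  refine ⟨fun i => ?_, fun i hi => toFinsupp_apply_of_odd d M hi, ?_⟩
  · rcases Nat.even_or_odd' i with ⟨s, rfl | rfl⟩
    · rw [toFinsupp_apply_two_mul]
      split_ifs with hs
      exacts [hd.1 s hs, by omega]
    · rw [toFinsupp_apply_of_odd d M (odd_two_mul_add_one s)]; omega
  · rintro _ _ ⟨s, rfl⟩ ⟨u, rfl⟩ hsu h2s h2u
    rw [← two_mul, toFinsupp_apply_two_mul] at h2s h2u
    split_ifs at h2s h2u with hs hu
    obtain ⟨k, hsk, hku, hk0⟩ := hd.2 s u (by omega) hu h2s h2u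
    exact ⟨2 * k, even_two_mul k, by omega, by omega, by
      rw [toFinsupp_apply_two_mul, if_pos (by omega), hk0]⟩

lemma admissible_of_isChungGraham {a : ℕ →₀ ℕ} (ha : IsChungGraham a) (M : ℕ) :
    Admissible (fun t => a (2 * t)) M := by
  refine ⟨fun t _ => ha.1 (2 * t), fun t u htu _ h2t h2u => ?_⟩
  obtain ⟨_, ⟨k, rfl⟩, htk, hku, hk0⟩ :=
    ha.2.2 (2 * t) (2 * u) (even_two_mul t) (even_two_mul u) (by omega) h2t h2u
  exact ⟨k, by omega, by omega, by rwa [← two_mul] at hk0⟩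

lemma eq_toFinsupp {a : ℕ →₀ ℕ} (hodd : ∀ i, Odd i → a i = 0)
    (hM : a.support ⊆ range (2 * M)) :
    a = toFinsupp (fun t => a (2 * t)) M := by
  ext i
  rcases Nat.even_or_odd' i with ⟨s, rfl | rfl⟩
  · rw [toFinsupp_apply_two_mul]
    split_ifs with hs
    · rfl
    · exact Finsupp.notMem_support_iff.mp fun h => by have := mem_range.mp (hM h); omega
  · rw [hodd _ (odd_two_mul_add_one s), toFinsupp_apply_of_odd _ _ (odd_two_mul_add_one s)]

end ToFinsupp

end ChungGraham

open ChungGraham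

theorem IsChungGraham.eq_of_fibVal_eq {a b : ℕ →₀ ℕ} (ha : IsChungGraham a)
    (hb : IsChungGraham b) (h : fibVal a = fibVal b) : a = b := by
  obtain ⟨N, hN⟩ := Finset.exists_nat_subset_range (a.support ∪ b.support)
  have hN2 := hN.trans (Finset.range_subset_range.mpr (Nat.le_mul_of_pos_left N two_pos))
  have ha' := eq_toFinsupp ha.2.1 (Finset.subset_union_left.trans hN2)
  have hb' := eq_toFinsupp hb.2.1 (Finset.subset_union_right.trans hN2)
  have hvalue : value (fun t => a (2 * t)) N = value (fun t => b (2 * t)) N := by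
    rw [← fibVal_toFinsupp, ← fibVal_toFinsupp, ← ha', ← hb', h]
  rw [ha', hb']
  exact toFinsupp_congr (eq_of_value_eq (admissible_of_isChungGraham ha N)
    (admissible_of_isChungGraham hb N) hvalue)

theorem chung_graham_theorem (n : ℕ) :
    ∃! a : ℕ →₀ ℕ, IsChungGraham a ∧ fibVal a = n := by
  have hn : n < Nat.fib (2 * n + 2) := by
    have := Nat.le_fib_add_one (2 * n + 2)
    omega
  obtain ⟨d, hd, hv⟩ := (exists_admissible_value_eq n n).1 hn
  have hcg := isChungGraham_toFinsupp hd
  have hval : fibVal (toFinsupp d n) = n := (fibVal_toFinsupp d n).trans hv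
  exact ⟨toFinsupp d n, ⟨hcg, hval⟩,
    fun a ha => ha.1.eq_of_fibVal_eq hcg (ha.2.trans hval.symm)⟩
end

section
/- Every non-negative integer has at least one Chung-Graham representation: there exists a finitely supported sequence (a_i) with a_i ∈ {0,1,2}, a_i = 0 for odd i, and between any two even indices with digit 2 there is an even index with digit 0, such that n = ∑ a_i F_{i+2}. -/
/-!
Greedy expansion from the top. With `F = fib (2 * m + 2)`, every `n < fib (2 * m + 4) =
2 * F + fib (2 * m + 1)` is `q * F + r` with `q ≤ 2` and `r < F`, so the digit `q` is placed at
position `2 * m` above a representation of `r`. When `q = 2` the remainder is even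
`< fib (2 * m + 1)`, and one carries along that representations of such numbers have every digit 2
followed by an even-indexed 0 below `2 * m`; this separates them from the new top 2, and the
invariant propagates since `n < fib (2 * m + 3)` forces `q = 0`, or `q = 1` with
`r < fib (2 * m + 1)`.
-/

open Finsupp Nat

theorem fibVal_add (a b : ℕ →₀ ℕ) : fibVal (a + b) = fibVal a + fibVal b :=
  sum_add_index' (fun _ => zero_mul _) fun _ _ _ => add_mul _ _ _

theorem fibVal_single (i c : ℕ) : fibVal (single i c) = c * fib (i + 2) :=
  sum_single_index (zero_mul _)

theorem isChungGraham_zero : IsChungGraham 0 := by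
  simp [IsChungGraham]

theorem add_single_apply_of_eq_zero {b : ℕ →₀ ℕ} {j q : ℕ} (hb : b j = 0) (i : ℕ) :
    (b + single j q) i = if i = j then q else b i := by
  by_cases h : i = j <;> simp [h, hb]

def EachTwoFollowedByZero (m : ℕ) (a : ℕ →₀ ℕ) : Prop :=
  ∀ i, a i = 2 → ∃ k, Even k ∧ i < k ∧ k < 2 * m ∧ a k = 0

section AddTopDigit

variable {b : ℕ →₀ ℕ} {m q : ℕ}

theorem IsChungGraham.add_single (hb : IsChungGraham b) (hsupp : ∀ i, 2 * m ≤ i → b i = 0)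
    (hq : q ≤ 2) (htwo : q = 2 → EachTwoFollowedByZero m b) :
    IsChungGraham (b + single (2 * m) q) := by
  obtain ⟨hb2, hbodd, hbsep⟩ := hb
  simp only [IsChungGraham, add_single_apply_of_eq_zero (hsupp _ le_rfl)]
  refine ⟨fun i => ?_, fun i hi => ?_, fun i j hi hj hij hai haj => ?_⟩
  · split_ifs
    exacts [hq, hb2 i]
  · rw [if_neg (by rintro rfl; exact Nat.not_odd_iff_even.2 (even_two_mul m) hi)]
    exact hbodd i hi
  · have hi2 : i ≠ 2 * m := by
      rintro rfl
      rw [if_neg hij.ne', hsupp j hij.le] at haj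
      omega
    rw [if_neg hi2] at hai
    have hi_lt : i < 2 * m := lt_of_not_ge fun h => by rw [hsupp i h] at hai; omega
    by_cases hj2 : j = 2 * m
    · subst hj2
      obtain ⟨k, hk, hik, hkj, hk0⟩ := htwo (by simpa using haj) i hai
      exact ⟨k, hk, hik, hkj, by rwa [if_neg hkj.ne]⟩
    · rw [if_neg hj2] at haj
      have hj_lt : j < 2 * m := lt_of_not_ge fun h => by rw [hsupp j h] at haj; omega
      obtain ⟨k, hk, hik, hkj, hk0⟩ := hbsep i j hi hj hij hai haj
      exact ⟨k, hk, hik, hkj, by rwa [if_neg (by omega)]⟩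

theorem EachTwoFollowedByZero.add_single (hsupp : ∀ i, 2 * m ≤ i → b i = 0)
    (h : q = 0 ∨ q = 1 ∧ EachTwoFollowedByZero m b) :
    EachTwoFollowedByZero (m + 1) (b + single (2 * m) q) := by
  intro i hi
  simp only [add_single_apply_of_eq_zero (hsupp _ le_rfl)] at hi ⊢
  have hi2 : i ≠ 2 * m := by rintro rfl; simp at hi; omega
  rw [if_neg hi2] at hi
  have hi_lt : i < 2 * m := lt_of_not_ge fun h => by rw [hsupp i h] at hi; omega
  rcases h with rfl | ⟨-, hb⟩
  · exact ⟨2 * m, even_two_mul m, hi_lt, by omega, by simp⟩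
  · obtain ⟨k, hk, hik, hkm, hk0⟩ := hb i hi
    exact ⟨k, hk, hik, by omega, by rwa [if_neg hkm.ne]⟩

end AddTopDigit

theorem exists_isChungGraham_of_lt_fib (m : ℕ) :
    ∀ n < fib (2 * m + 2), ∃ a : ℕ →₀ ℕ, IsChungGraham a ∧ fibVal a = n ∧
      (∀ i, 2 * m ≤ i → a i = 0) ∧ (n < fib (2 * m + 1) → EachTwoFollowedByZero m a) := by
  induction m with
  | zero =>
    intro n hn
    obtain rfl : n = 0 := by simpa using hn
    exact ⟨0, isChungGraham_zero, by simp [fibVal], by simp, by simp [EachTwoFollowedByZero]⟩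
  | succ m ih =>
    intro n hn
    set F := fib (2 * m + 2)
    have hF3 : fib (2 * (m + 1) + 1) = F + fib (2 * m + 1) := by
      rw [show 2 * (m + 1) + 1 = 2 * m + 1 + 2 by ring, fib_add_two, add_comm]
    have hF4 : fib (2 * (m + 1) + 2) = 2 * F + fib (2 * m + 1) := by
      rw [show 2 * (m + 1) + 2 = 2 * m + 2 + 2 by ring, fib_add_two,
        show 2 * m + 2 + 1 = 2 * (m + 1) + 1 by ring, hF3]
      ring
    have hF1 : fib (2 * m + 1) ≤ F := fib_mono (by omega)
    have hq3 : n / F < 3 := Nat.div_lt_iff_lt_mul (fib_pos.2 (by omega)) |>.2 (by omega)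
    have hdm := Nat.div_add_mod n F
    set q := n / F
    set r := n % F
    have hq : q ≤ 2 ∧ (q = 2 → r < fib (2 * m + 1)) ∧
        (n < fib (2 * (m + 1) + 1) → q = 0 ∨ q = 1 ∧ r < fib (2 * m + 1)) := by
      interval_cases q <;> omega
    obtain ⟨b, hb, hbval, hbsupp, hbtwo⟩ := ih r (Nat.mod_lt _ (fib_pos.2 (by omega)))
    refine ⟨b + single (2 * m) q, hb.add_single hbsupp hq.1 fun h => hbtwo (hq.2.1 h), ?_,
      fun i hi => ?_, fun hn' => EachTwoFollowedByZero.add_single hbsupp ?_⟩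
    · rw [fibVal_add, fibVal_single, hbval]
      linarith
    · rw [add_single_apply_of_eq_zero (hbsupp _ le_rfl), if_neg (by omega), hbsupp i (by omega)]
    · exact (hq.2.2 hn').imp_right fun h => ⟨h.1, hbtwo h.2⟩

theorem chung_graham_exists (n : ℕ) :
    ∃ a : ℕ →₀ ℕ, IsChungGraham a ∧ fibVal a = n := by
  have hn : n < fib (2 * (n + 1) + 2) :=
    calc n < n + 1 := n.lt_succ_self
      _ ≤ fib (n + 1 + 2) := fib_add_two_strictMono.id_le (n + 1)
      _ ≤ fib (2 * (n + 1) + 2) := fib_mono (by omega)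
  obtain ⟨a, ha, hval, -⟩ := exists_isChungGraham_of_lt_fib (n + 1) n hn
  exact ⟨a, ha, hval⟩
end

section
/- The Chung-Graham representation is unambiguous: if (a_i) and (b_i) are two finitely supported sequences each satisfying the Chung-Graham conditions (digits in {0,1,2}, zero at odd indices, and between any two even indices carrying digit 2 there is an even index carrying digit 0) and ∑ a_i F_{i+2} = ∑ b_i F_{i+2}, then a = b. -/
/-!
Only even positions carry digits, so a Chung–Graham representation is a digit string `g` on the
weights `F (2k+2)` with `g k ≤ 2` and a `0` between any two `2`s. The digits below `t` then sum to
less than `F (2t+2)`, and even to less than `F (2t+1)` when every `2` below `t` is followed by a `0`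
below `t`; this pair of bounds is proved together by induction on `t`, the case of a top digit `2`
using `F (2t+1) + 2 F (2t+2) = F (2t+4)`. Since every prefix value stays below the next weight,
the top digit is the quotient of the value by its weight, and uniqueness follows digit by digit.
-/

open Finset

theorem Nat.eq_of_sum_range_mul_eq {w g h : ℕ → ℕ}
    (hg : ∀ t, ∑ k ∈ range t, g k * w k < w t) (hh : ∀ t, ∑ k ∈ range t, h k * w k < w t) :
    ∀ T, ∑ k ∈ range T, g k * w k = ∑ k ∈ range T, h k * w k → ∀ k < T, g k = h k := by
  intro T
  induction T with
  | zero => simp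
  | succ s ih =>
    intro heq k hk
    rw [sum_range_succ, sum_range_succ] at heq
    have hw : 0 < w s := (Nat.zero_le _).trans_lt (hg s)
    have top (f : ℕ → ℕ) (hf : ∑ k ∈ range s, f k * w k < w s) :
        (∑ k ∈ range s, f k * w k + f s * w s) / w s = f s := by
      rw [Nat.add_mul_div_right _ _ hw, Nat.div_eq_of_lt hf, zero_add]
    have hs : g s = h s := by rw [← top g (hg s), ← top h (hh s), heq]
    rcases Nat.lt_succ_iff_lt_or_eq.mp hk with hk | rfl
    · exact ih (by rw [hs] at heq; omega) k hk
    · exact hs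

def TwosClosedBelow (g : ℕ → ℕ) (t : ℕ) : Prop :=
  ∀ k < t, g k = 2 → ∃ m, k < m ∧ m < t ∧ g m = 0

theorem sum_range_mul_fib_lt {g : ℕ → ℕ} (hle : ∀ k, g k ≤ 2)
    (hsep : ∀ k l, k < l → g k = 2 → g l = 2 → ∃ m, k < m ∧ m < l ∧ g m = 0) (t : ℕ) :
    ∑ k ∈ range t, g k * Nat.fib (2 * k + 2) < Nat.fib (2 * t + 2) ∧
      (TwosClosedBelow g t → ∑ k ∈ range t, g k * Nat.fib (2 * k + 2) < Nat.fib (2 * t + 1)) := by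
  induction t with
  | zero => simp
  | succ t ih =>
    obtain ⟨hlt, hclosed⟩ := ih
    have f3 : Nat.fib (2 * t + 3) = Nat.fib (2 * t + 1) + Nat.fib (2 * t + 2) := Nat.fib_add_two
    have f4 : Nat.fib (2 * t + 4) = Nat.fib (2 * t + 2) + Nat.fib (2 * t + 3) := Nat.fib_add_two
    rw [sum_range_succ, show 2 * (t + 1) + 2 = 2 * t + 4 by ring,
      show 2 * (t + 1) + 1 = 2 * t + 3 by ring]
    rcases (by have := hle t; omega : g t = 0 ∨ g t = 1 ∨ g t = 2) with h0 | h1 | h2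
    · simp only [h0]
      omega
    · have hclosed_of_succ (hc : TwosClosedBelow g (t + 1)) : TwosClosedBelow g t := fun k hk hk2 => by
        obtain ⟨m, hkm, hmt, hm⟩ := hc k (by omega) hk2
        exact ⟨m, hkm, lt_of_le_of_ne (Nat.lt_succ_iff.mp hmt) (by rintro rfl; omega), hm⟩
      simp only [h1]
      exact ⟨by omega, fun hc => by have := hclosed (hclosed_of_succ hc); omega⟩
    · have hopen : ¬TwosClosedBelow g (t + 1) := fun hc => by
        obtain ⟨m, _, _, _⟩ := hc t (by omega) h2
        omega
      have := hclosed fun k hk hk2 => hsep k t hk hk2 h2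
      simp only [h2, hopen, false_imp_iff, and_true]
      omega

theorem fibVal_eq_sum_range {a : ℕ →₀ ℕ} (hodd : ∀ i, Odd i → a i = 0) {T : ℕ}
    (hT : a.support ⊆ range T) : fibVal a = ∑ k ∈ range T, a (2 * k) * Nat.fib (2 * k + 2) := by
  have hsupp : a.support ⊆ (range T).image (2 * ·) := fun i hi => by
    obtain ⟨k, rfl⟩ := even_iff_exists_two_mul.mp
      (Nat.not_odd_iff_even.mp fun ho => Finsupp.mem_support_iff.mp hi (hodd i ho))
    exact mem_image_of_mem _ (mem_range.mpr (by have := mem_range.mp (hT hi); omega))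
  rw [fibVal, Finsupp.sum_of_support_subset a hsupp (fun i c => c * Nat.fib (i + 2))
      fun _ _ => zero_mul _,
    sum_image fun _ _ _ _ h => by simpa using h]

theorem IsChungGraham.sum_range_lt_fib {a : ℕ →₀ ℕ} (ha : IsChungGraham a) (t : ℕ) :
    ∑ k ∈ range t, a (2 * k) * Nat.fib (2 * k + 2) < Nat.fib (2 * t + 2) := by
  refine (sum_range_mul_fib_lt (fun k => ha.1 _) (fun k l hkl hk hl => ?_) t).1
  obtain ⟨m, ⟨r, rfl⟩, hkm, hml, hm⟩ :=
    ha.2.2 (2 * k) (2 * l) (even_two_mul k) (even_two_mul l) (by omega) hk hl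
  exact ⟨r, by omega, by omega, by rw [← two_mul] at hm; exact hm⟩

theorem chung_graham_unique (a b : ℕ →₀ ℕ)
    (ha : IsChungGraham a) (hb : IsChungGraham b)
    (h : fibVal a = fibVal b) : a = b := by
  obtain ⟨T, hT⟩ := (a.support ∪ b.support).exists_nat_subset_range
  have haT := union_subset_left hT
  have hbT := union_subset_right hT
  have heven := Nat.eq_of_sum_range_mul_eq ha.sum_range_lt_fib hb.sum_range_lt_fib T
    (by rw [← fibVal_eq_sum_range ha.2.1 haT, ← fibVal_eq_sum_range hb.2.1 hbT, h])
  have hvanish {c : ℕ →₀ ℕ} (hc : c.support ⊆ range T) {i : ℕ} (hi : T ≤ i) : c i = 0 :=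
    Finsupp.notMem_support_iff.mp fun hmem => by have := mem_range.mp (hc hmem); omega
  ext i
  obtain ⟨k, rfl | rfl⟩ := Nat.even_or_odd' i
  · by_cases hk : k < T
    · exact heven k hk
    · rw [hvanish haT (by omega), hvanish hbT (by omega)]
  · rw [ha.2.1 _ (odd_two_mul_add_one k), hb.2.1 _ (odd_two_mul_add_one k)]
end

section
/- If (a_i) is a valid Chung-Graham representation (digits in {0,1,2}, zero at odd indices, between any two even indices with digit 2 there is an even index with digit 0), and (b_i), (c_i) are defined by the split a_i = 0 ↦ (0,0), a_i = 1 ↦ (0,1), a_i = 2 ↦ (1,1), then both (b_i) and (c_i) are valid Zeckendorf representations, i.e., binary sequences with no two consecutive 1's. -/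
theorem isZeckendorf_of_le_one_of_odd_eq_zero {d : ℕ →₀ ℕ} (hle : ∀ i, d i ≤ 1)
    (hodd : ∀ i, Odd i → d i = 0) : IsZeckendorf d := by
  refine ⟨hle, fun i => ?_⟩
  rcases Nat.even_or_odd i with hi | hi
  · rw [hodd (i + 1) hi.add_one, mul_zero]
  · rw [hodd i hi, zero_mul]

namespace IsSplit

variable {a b c : ℕ →₀ ℕ}

theorem left_eq_zero (h : IsSplit a b c) {i : ℕ} (hi : a i = 0) : b i = 0 := ((h i).1 hi).1

theorem right_eq_zero (h : IsSplit a b c) {i : ℕ} (hi : a i = 0) : c i = 0 := ((h i).1 hi).2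

theorem left_le_one_and_right_le_one (h : IsSplit a b c) {i : ℕ} (hi : a i ≤ 2) :
    b i ≤ 1 ∧ c i ≤ 1 := by
  obtain ⟨h0, h1, h2⟩ := h i
  interval_cases a i
  · obtain ⟨hb, hc⟩ := h0 rfl
    omega
  · obtain ⟨hb, hc⟩ := h1 rfl
    omega
  · obtain ⟨hb, hc⟩ := h2 rfl
    omega

end IsSplit

theorem split_of_chung_graham_is_zeckendorf (a b c : ℕ →₀ ℕ)
    (ha : IsChungGraham a) (hsplit : IsSplit a b c) :
    IsZeckendorf b ∧ IsZeckendorf c := by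
  obtain ⟨hle, hodd, -⟩ := ha
  have hbc i := hsplit.left_le_one_and_right_le_one (hle i)
  exact ⟨isZeckendorf_of_le_one_of_odd_eq_zero (fun i => (hbc i).1)
      fun i hi => hsplit.left_eq_zero (hodd i hi),
    isZeckendorf_of_le_one_of_odd_eq_zero (fun i => (hbc i).2)
      fun i hi => hsplit.right_eq_zero (hodd i hi)⟩
end

section
/- Let φ = (1+√5)/2. For every n ≥ 1, if n has Zeckendorf representation n = ∑ a_i F_{i+2}, then ∑ a_i F_{i+3} equals either ⌊φ·n⌋ or ⌊φ·n⌋ + 1. -/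
open scoped goldenRatio
open Real

lemma aux_geom (r : ℝ) (h0 : 0 ≤ r) (h1 : r < 1) (t : Finset ℕ) :
    ∑ j ∈ t, r ^ j ≤ 1 / (1 - r) := by
  have hsub : t ⊆ Finset.range (t.sup id + 1) := fun j hj =>
    Finset.mem_range.2 (Nat.lt_succ_of_le (Finset.le_sup (f := id) hj))
  have h2 : (0:ℝ) < 1 - r := by linarith
  calc ∑ j ∈ t, r ^ j ≤ ∑ j ∈ Finset.range (t.sup id + 1), r ^ j :=
        Finset.sum_le_sum_of_subset_of_nonneg hsub (fun i _ _ => pow_nonneg h0 i)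
    _ ≤ 1 / (1 - r) := by
        rw [geom_sum_eq (ne_of_lt h1)]
        have hN : (0:ℝ) ≤ r ^ (t.sup id + 1) := pow_nonneg h0 _
        have heq : (r ^ (t.sup id + 1) - 1) / (r - 1)
            = (1 - r ^ (t.sup id + 1)) / (1 - r) := by
          rw [← neg_div_neg_eq]; ring_nf
        rw [heq, div_le_div_iff₀ h2 h2]
        nlinarith

lemma aux_noconsec (r : ℝ) (h0 : 0 ≤ r) (h1 : r < 1) (s : Finset ℕ)
    (hs : ∀ i ∈ s, i + 1 ∉ s) : ∑ i ∈ s, r ^ i ≤ 1 / (1 - r ^ 2) := by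
  have h2 : (0:ℝ) < 1 + r := by linarith
  have h3 : (0:ℝ) < 1 - r := by linarith
  have key : (1 + r) * ∑ i ∈ s, r ^ i ≤ 1 / (1 - r) := by
    have himg : ∑ i ∈ s, r ^ (i + 1) = ∑ j ∈ s.image (· + 1), r ^ j :=
      (Finset.sum_image (fun a _ b _ h => by omega)).symm
    have hdisj : Disjoint s (s.image (· + 1)) := by
      rw [Finset.disjoint_left]
      intro j hj hj'
      obtain ⟨i, hi, rfl⟩ := Finset.mem_image.1 hj'
      exact hs i hi hj
    calc (1 + r) * ∑ i ∈ s, r ^ i = ∑ i ∈ s, r ^ i + ∑ i ∈ s, r ^ (i + 1) := by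
          rw [add_mul, one_mul, Finset.mul_sum]
          congr 1
          exact Finset.sum_congr rfl fun i _ => by ring
      _ = ∑ j ∈ s ∪ s.image (· + 1), r ^ j := by rw [himg, Finset.sum_union hdisj]
      _ ≤ 1 / (1 - r) := aux_geom r h0 h1 _
  have h4 : (0:ℝ) < 1 - r ^ 2 := by nlinarith
  have heq : 1 / (1 - r ^ 2) = 1 / (1 - r) / (1 + r) := by
    rw [div_div, div_eq_div_iff (ne_of_gt h4) (by positivity)]
    ring
  rw [heq, le_div_iff₀ h2]
  linarith [key]

theorem shifted_zeckendorf_floor_phi (n : ℕ) (hn : 1 ≤ n) (a : ℕ →₀ ℕ)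
    (ha : IsZeckendorf a) (hval : fibVal a = n) :
    ((a.sum fun i c => c * Nat.fib (i + 3) : ℕ) : ℤ) = ⌊(1 + Real.sqrt 5) / 2 * n⌋ ∨
    ((a.sum fun i c => c * Nat.fib (i + 3) : ℕ) : ℤ) = ⌊(1 + Real.sqrt 5) / 2 * n⌋ + 1 := by
  have hφ : (1 + Real.sqrt 5) / 2 = goldenRatio := rfl
  rw [hφ]
  set S : ℕ := a.sum fun i c => c * Nat.fib (i + 3) with hSdef
  have hsupp1 : ∀ i ∈ a.support, a i = 1 := fun i hi =>
    le_antisymm (ha.1 i) (Nat.one_le_iff_ne_zero.2 (Finsupp.mem_support_iff.1 hi))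
  have noconsec : ∀ i ∈ a.support, i + 1 ∉ a.support := by
    intro i hi hi'
    have h := ha.2 i
    rw [hsupp1 i hi, hsupp1 _ hi'] at h
    omega
  have hS : (S : ℝ) = ∑ i ∈ a.support, (Nat.fib (i + 3) : ℝ) := by
    rw [hSdef, Finsupp.sum]
    push_cast
    exact Finset.sum_congr rfl fun i hi => by rw [hsupp1 i hi]; push_cast; ring
  have hn' : (n : ℝ) = ∑ i ∈ a.support, (Nat.fib (i + 2) : ℝ) := by
    rw [← hval, fibVal, Finsupp.sum]
    push_cast
    exact Finset.sum_congr rfl fun i hi => by rw [hsupp1 i hi]; push_cast; ring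
  have hkey : (S : ℝ) - goldenRatio * n = ∑ i ∈ a.support, goldenConj ^ (i + 2) := by
    rw [hS, hn', Finset.mul_sum, ← Finset.sum_sub_distrib]
    exact Finset.sum_congr rfl fun i _ => fib_succ_sub_goldenRatio_mul_fib (i + 2)
  -- bound the error term
  set r : ℝ := (Real.sqrt 5 - 1) / 2 with hrdef
  have h5 : Real.sqrt 5 ^ 2 = 5 := Real.sq_sqrt (by norm_num)
  have h5nn : (0:ℝ) ≤ Real.sqrt 5 := Real.sqrt_nonneg 5
  have h5a : 2 < Real.sqrt 5 := by nlinarith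
  have h5b : Real.sqrt 5 < 3 := by nlinarith
  have hr0 : 0 ≤ r := by rw [hrdef]; linarith
  have hr1 : r < 1 := by rw [hrdef]; linarith
  have habsψ : |goldenConj| = r := by
    rw [abs_of_neg goldenConj_neg, goldenConj, hrdef]
    ring
  have hEbound : |∑ i ∈ a.support, goldenConj ^ (i + 2)| ≤ r ^ 2 / (1 - r ^ 2) := by
    calc |∑ i ∈ a.support, goldenConj ^ (i + 2)|
        ≤ ∑ i ∈ a.support, |goldenConj ^ (i + 2)| := Finset.abs_sum_le_sum_abs _ _
      _ = ∑ i ∈ a.support, r ^ (i + 2) := by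
          exact Finset.sum_congr rfl fun i _ => by rw [abs_pow, habsψ]
      _ = r ^ 2 * ∑ i ∈ a.support, r ^ i := by
          rw [Finset.mul_sum]
          exact Finset.sum_congr rfl fun i _ => by ring
      _ ≤ r ^ 2 * (1 / (1 - r ^ 2)) := by
          apply mul_le_mul_of_nonneg_left (aux_noconsec r hr0 hr1 _ noconsec)
          positivity
      _ = r ^ 2 / (1 - r ^ 2) := by ring
  have hlt1 : r ^ 2 / (1 - r ^ 2) < 1 := by
    rw [div_lt_one (by nlinarith)]
    nlinarith
  have habs := abs_le.1 hEbound
  have hfloor1 : (S : ℤ) - 1 ≤ ⌊goldenRatio * (n : ℝ)⌋ := by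
    apply Int.le_floor.2
    push_cast
    linarith [hkey, habs.2, hlt1]
  have hfloor2 : ⌊goldenRatio * (n : ℝ)⌋ < (S : ℤ) + 1 := by
    apply Int.floor_lt.2
    push_cast
    linarith [hkey, habs.1, hlt1]
  omega
end

section
/- The number of valid Chung-Graham representations using only even indices up to 2m (i.e., strings of digits in {0,1,2} at positions 0, 2, ..., 2m with the condition that between any two positions carrying digit 2 there is a position carrying digit 0) equals F_{2m+4} − 1 plus 1, i.e., exactly F_{2m+4}, matching the count of integers 0 ≤ n < F_{2m+4}. -/
/-!
Only the even positions `0, 2, …, 2m` carry digits, so such a representation is a word of length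
`m + 1` over `{0, 1, 2}` in which any two `2`s are separated by a `0`. After a leading `2`, the rest
of the word must have a `0` before each of its `2`s. Splitting by the first letter, the numbers
`s n` of separated words and `g n` of separated words with a `0` before every `2` satisfy
`s (n + 1) = 2 s n + g n` and `g (n + 1) = s n + g n`, with `s 0 = g 0 = 1`; these are the
recurrences of `F (2n + 2)` and `F (2n + 1)`.
-/

namespace ChungGraham

variable {n : ℕ}

def TwosSeparated (w : Fin n → Fin 3) : Prop :=
  ∀ i j, i < j → w i = 2 → w j = 2 → ∃ k, i < k ∧ k < j ∧ w k = 0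

def ZeroBeforeTwos (w : Fin n → Fin 3) : Prop :=
  ∀ j, w j = 2 → ∃ k, k < j ∧ w k = 0

theorem twosSeparated_cons (d : Fin 3) (v : Fin n → Fin 3) :
    TwosSeparated (Fin.cons d v : Fin (n + 1) → Fin 3) ↔
      TwosSeparated v ∧ (d = 2 → ZeroBeforeTwos v) := by
  simp only [TwosSeparated, ZeroBeforeTwos, Fin.forall_fin_succ, Fin.exists_fin_succ,
    Fin.cons_zero, Fin.cons_succ, Fin.succ_lt_succ_iff, Fin.not_lt_zero, Fin.succ_pos]
  aesop

theorem zeroBeforeTwos_cons (d : Fin 3) (v : Fin n → Fin 3) :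
    ZeroBeforeTwos (Fin.cons d v : Fin (n + 1) → Fin 3) ↔
      d ≠ 2 ∧ (d = 0 ∨ ZeroBeforeTwos v) := by
  simp only [ZeroBeforeTwos, Fin.forall_fin_succ, Fin.exists_fin_succ,
    Fin.cons_zero, Fin.cons_succ, Fin.succ_lt_succ_iff, Fin.not_lt_zero, Fin.succ_pos]
  by_cases hd : d = 0 <;> simp [hd]

theorem card_subtype_fin_succ_pi {α : Type*} [Fintype α] (P : (Fin (n + 1) → α) → Prop) :
    Nat.card {w // P w} = ∑ d, Nat.card {v : Fin n → α // P (Fin.cons d v)} := by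
  rw [← Nat.card_sigma]
  exact Nat.card_congr <|
    ((Fin.consEquiv fun _ => α).subtypeEquiv fun _ => Iff.rfl).symm.trans
      (Equiv.subtypeProdEquivSigmaSubtype fun d v => P (Fin.cons d v))

theorem card_twosSeparated (n : ℕ) :
    Nat.card {w : Fin n → Fin 3 // TwosSeparated w} = Nat.fib (2 * n + 2) ∧
      Nat.card {w : Fin n → Fin 3 // TwosSeparated w ∧ ZeroBeforeTwos w} =
        Nat.fib (2 * n + 1) := by
  induction n with
  | zero => simp [TwosSeparated, ZeroBeforeTwos]
  | succ n ih =>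
    rw [card_subtype_fin_succ_pi, card_subtype_fin_succ_pi]
    simp only [Fin.sum_univ_three, twosSeparated_cons, zeroBeforeTwos_cons, Fin.reduceEq,
      IsEmpty.forall_iff, forall_const, ne_eq, not_false_eq_true, not_true_eq_false, true_or,
      false_or, and_true, true_and, and_false, false_and, Nat.card_of_isEmpty, add_zero]
    obtain ⟨hs, hg⟩ := ih
    have h3 : Nat.fib (2 * n + 3) = Nat.fib (2 * n + 1) + Nat.fib (2 * n + 2) := Nat.fib_add_two
    have h4 : Nat.fib (2 * n + 4) = Nat.fib (2 * n + 2) + Nat.fib (2 * n + 3) := Nat.fib_add_two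
    refine ⟨?_, ?_⟩
    · rw [hs, hg, show 2 * (n + 1) + 2 = 2 * n + 4 by ring, h4, h3]
      ring
    · rw [hs, hg, show 2 * (n + 1) + 1 = 2 * n + 3 by ring, h3]
      ring

noncomputable def toEvenFinsupp (w : Fin n → Fin 3) : ℕ →₀ ℕ :=
  Finsupp.embDomain
    ⟨fun k : Fin n => 2 * (k : ℕ), fun _ _ h => Fin.ext (Nat.eq_of_mul_eq_mul_left two_pos h)⟩
    (Finsupp.equivFunOnFinite.symm fun k => (w k : ℕ))

@[simp]
theorem toEvenFinsupp_apply_two_mul (w : Fin n → Fin 3) (k : Fin n) :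
    toEvenFinsupp w (2 * k) = w k :=
  Finsupp.embDomain_apply_self _ _ k

theorem exists_two_mul_eq_of_toEvenFinsupp_ne_zero {w : Fin n → Fin 3} {i : ℕ}
    (h : toEvenFinsupp w i ≠ 0) : ∃ k : Fin n, 2 * (k : ℕ) = i := by
  by_contra hi
  exact h (Finsupp.embDomain_of_notMem_range _ _ _ hi)

theorem toEvenFinsupp_injective : Function.Injective (toEvenFinsupp : (Fin n → Fin 3) → _) :=
  fun v w h => funext fun k => Fin.ext <| by
    rw [← toEvenFinsupp_apply_two_mul, h, toEvenFinsupp_apply_two_mul]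

theorem isChungGraham_toEvenFinsupp_iff (w : Fin n → Fin 3) :
    IsChungGraham (toEvenFinsupp w) ↔ TwosSeparated w := by
  have hsupp : ∀ {i}, toEvenFinsupp w i ≠ 0 → ∃ k : Fin n, 2 * (k : ℕ) = i :=
    exists_two_mul_eq_of_toEvenFinsupp_ne_zero
  have htwo : ∀ {k : Fin n}, toEvenFinsupp w (2 * k) = 2 ↔ w k = 2 := by
    simp [Fin.ext_iff]
  constructor
  · rintro ⟨-, -, hsep⟩ i j hij hi hj
    obtain ⟨k, hk_even, hik, hkj, hk⟩ :=
      hsep (2 * i) (2 * j) (even_two_mul _) (even_two_mul _) (by omega) (htwo.2 hi) (htwo.2 hj)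
    obtain ⟨k, rfl⟩ := even_iff_exists_two_mul.1 hk_even
    refine ⟨⟨k, by omega⟩, show (i : ℕ) < k by omega, show k < (j : ℕ) by omega, Fin.ext ?_⟩
    rw [← toEvenFinsupp_apply_two_mul]
    exact hk
  · intro hsep
    refine ⟨fun i => ?_, fun i hi => ?_, ?_⟩
    · by_cases h : toEvenFinsupp w i = 0
      · simp [h]
      obtain ⟨k, rfl⟩ := hsupp h
      simp only [toEvenFinsupp_apply_two_mul]
      omega
    · by_contra h
      obtain ⟨k, rfl⟩ := hsupp h
      exact Nat.not_odd_iff_even.2 (even_two_mul _) hi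
    · intro i j _ _ hij hi hj
      obtain ⟨i, rfl⟩ := hsupp (by omega : toEvenFinsupp w i ≠ 0)
      obtain ⟨j, rfl⟩ := hsupp (by omega : toEvenFinsupp w j ≠ 0)
      obtain ⟨k, hik, hkj, hk⟩ := hsep i j (by omega) (htwo.1 hi) (htwo.1 hj)
      exact ⟨2 * k, even_two_mul _, by omega, by omega, by simp [hk]⟩

theorem setOf_isChungGraham_bounded_eq_image (m : ℕ) :
    {a : ℕ →₀ ℕ | IsChungGraham a ∧ ∀ i, 2 * m < i → a i = 0} =
      toEvenFinsupp '' {w : Fin (m + 1) → Fin 3 | TwosSeparated w} := by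
  ext a
  constructor
  · rintro ⟨ha, hbound⟩
    let w : Fin (m + 1) → Fin 3 := fun k => ⟨a (2 * k), Nat.lt_succ_of_le (ha.1 _)⟩
    have haw : toEvenFinsupp w = a := by
      ext i
      by_cases hi : ∃ k : Fin (m + 1), 2 * (k : ℕ) = i
      · obtain ⟨k, rfl⟩ := hi
        simp [w]
      have hw : toEvenFinsupp w i = 0 := by
        by_contra h
        exact hi (exists_two_mul_eq_of_toEvenFinsupp_ne_zero h)
      rw [hw, eq_comm]
      rcases Nat.even_or_odd i with ⟨k, rfl⟩ | hodd
      · exact hbound _ (by_contra fun hk => hi ⟨⟨k, by omega⟩, by simp; omega⟩)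
      · exact ha.2.1 i hodd
    exact ⟨w, (isChungGraham_toEvenFinsupp_iff w).1 (haw ▸ ha), haw⟩
  · rintro ⟨w, hw, rfl⟩
    refine ⟨(isChungGraham_toEvenFinsupp_iff w).2 hw, fun i hi => ?_⟩
    by_contra h
    obtain ⟨k, rfl⟩ := exists_two_mul_eq_of_toEvenFinsupp_ne_zero h
    omega

end ChungGraham

theorem card_chung_graham_bounded (m : ℕ) :
    {a : ℕ →₀ ℕ | IsChungGraham a ∧ ∀ i, 2 * m < i → a i = 0}.ncard =
      Nat.fib (2 * m + 4) := by
  rw [ChungGraham.setOf_isChungGraham_bounded_eq_image,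
    Set.ncard_image_of_injective _ ChungGraham.toEvenFinsupp_injective, ← Nat.card_coe_set_eq]
  exact (ChungGraham.card_twosSeparated (m + 1)).1
end
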